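/- arXiv:1504.04449 — 2 statements merged into one kernel-verified Lean document; each statement's English description precedes it below -/
import Mathlib

section
/- Let |ψ_{ABC}⟩ be a pure tripartite state with marginals ρ_{AB}, ρ_{AC}, ρ_B, ρ_C. Then the quantum information variance satisfies V(ρ_{AB} ‖ I_A⊗ρ_B) = V(ρ_{AC} ‖ I_A⊗ρ_C), where V(ρ‖σ) = tr[ρ(log ρ − log σ)²] − D(ρ‖σ)². -/
open Matrix Kronecker ComplexOrder

/-- Apply a real function to a Hermitian matrix via its spectral decomposition
(returns 0 on non-Hermitian input). -/
noncomputable def hermFun {n : Type*} [Fintype n] [DecidableEq n]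
    (f : ℝ → ℝ) (A : Matrix n n ℂ) : Matrix n n ℂ :=
  if hA : A.IsHermitian then
    (hA.eigenvectorUnitary : Matrix n n ℂ) *
      Matrix.diagonal (fun i => (f (hA.eigenvalues i) : ℂ)) *
      (hA.eigenvectorUnitary : Matrix n n ℂ)ᴴ
  else 0

/-- Matrix logarithm, taken on the support (`log 0 := 0` on the kernel). -/
noncomputable def mLog {n : Type*} [Fintype n] [DecidableEq n]
    (A : Matrix n n ℂ) : Matrix n n ℂ :=
  hermFun (fun x => if x ≤ 0 then 0 else Real.log x) A

/-- Quantum relative entropy `D(ρ‖σ) = tr[ρ(log ρ − log σ)]`. -/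
noncomputable def relEnt {n : Type*} [Fintype n] [DecidableEq n]
    (ρ σ : Matrix n n ℂ) : ℝ :=
  ((ρ * (mLog ρ - mLog σ)).trace).re

/-- Marginal on AB of a pure tripartite state. -/
noncomputable def rhoAB {a b c : ℕ} (ψ : Fin a × Fin b × Fin c → ℂ) :
    Matrix (Fin a × Fin b) (Fin a × Fin b) ℂ :=
  fun p q => ∑ k : Fin c, ψ (p.1, p.2, k) * star (ψ (q.1, q.2, k))

/-- Marginal on AC of a pure tripartite state. -/
noncomputable def rhoAC {a b c : ℕ} (ψ : Fin a × Fin b × Fin c → ℂ) :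
    Matrix (Fin a × Fin c) (Fin a × Fin c) ℂ :=
  fun p q => ∑ j : Fin b, ψ (p.1, j, p.2) * star (ψ (q.1, j, q.2))

/-- Marginal on B of a pure tripartite state. -/
noncomputable def rhoB {a b c : ℕ} (ψ : Fin a × Fin b × Fin c → ℂ) :
    Matrix (Fin b) (Fin b) ℂ :=
  fun p q => ∑ i : Fin a, ∑ k : Fin c, ψ (i, p, k) * star (ψ (i, q, k))

/-- Marginal on C of a pure tripartite state. -/
noncomputable def rhoC {a b c : ℕ} (ψ : Fin a × Fin b × Fin c → ℂ) :
    Matrix (Fin c) (Fin c) ℂ :=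
  fun p q => ∑ i : Fin a, ∑ j : Fin b, ψ (i, j, p) * star (ψ (i, j, q))


/-- Quantum information variance `V(ρ‖σ) = tr[ρ(log ρ − log σ)²] − D(ρ‖σ)²`. -/
noncomputable def varEnt {n : Type*} [Fintype n] [DecidableEq n]
    (ρ σ : Matrix n n ℂ) : ℝ :=
  ((ρ * (mLog ρ - mLog σ) ^ 2).trace).re - (relEnt ρ σ) ^ 2

/-! On the finite joint spectrum of the matrices involved, the truncated logarithm agrees with a
real polynomial `p`, so every matrix logarithm in `V` may be replaced by `p` of the matrix.
Reading `ψ` as an operator `M : ℂ^C → ℂ^A ⊗ ℂ^B` gives `ρ_AB = M M†` and `ρ_Cᵀ = M† M`, hence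
`tr[ρ_AB q(ρ_AB)] = tr[ρ_C q(ρ_C)]` for every polynomial `q` and `ρ_AB p(ρ_AB) = M p(ρ_C)ᵀ M†`.
Expanding the square, `V(ρ_AB ‖ I_A ⊗ ρ_B)` becomes a combination of traces over `B` and over `C`
alone and of the cross term `⟨ψ, (I_A ⊗ p(ρ_B) ⊗ p(ρ_C)) ψ⟩`, which is symmetric in `B` and `C`. -/

open Polynomial

theorem Polynomial.exists_eqOn_eval {F : Type*} [Field F] {s : Set F} (hs : s.Finite)
    (f : F → F) : ∃ p : F[X], Set.EqOn p.eval f s := by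
  classical
  exact ⟨Lagrange.interpolate hs.toFinset id f, fun _ hx => by
    simpa using Lagrange.eval_interpolate_at_node f (Set.injOn_id _) (hs.mem_toFinset.2 hx)⟩

namespace Matrix

theorem IsHermitian.one_kronecker {α m n : Type*} [CommSemiring α] [StarRing α] [DecidableEq m]
    {B : Matrix n n α} (hB : B.IsHermitian) : ((1 : Matrix m m α) ⊗ₖ B).IsHermitian := by
  rw [IsHermitian, conjTranspose_kronecker, conjTranspose_one, hB.eq]

variable {R α : Type*} [CommSemiring R]
variable {m n : Type*} [Fintype m] [Fintype n] [DecidableEq m] [DecidableEq n]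

section CommSemiring

variable [CommSemiring α] [Algebra R α]

theorem aeval_mul_mul_eq_mul_aeval_mul (M : Matrix m n α) (N : Matrix n m α) (p : R[X]) :
    aeval (M * N) p * M = M * aeval (N * M) p := by
  induction p using Polynomial.induction_on' with
  | add p q hp hq => simp only [map_add, Matrix.add_mul, Matrix.mul_add, hp, hq]
  | monomial k r =>
    have hpow : (M * N) ^ k * M = M * (N * M) ^ k := by
      induction k with
      | zero => simp
      | succ k ih => rw [pow_succ', pow_succ', Matrix.mul_assoc, ih]; simp only [Matrix.mul_assoc]
    simp only [aeval_monomial, Algebra.algebraMap_eq_smul_one, smul_mul_assoc, one_mul,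
      Matrix.smul_mul, Matrix.mul_smul, hpow]

theorem trace_mul_aeval_mul_comm (M : Matrix m n α) (N : Matrix n m α) (p : R[X]) :
    (M * N * aeval (M * N) p).trace = (N * M * aeval (N * M) p).trace := by
  rw [Matrix.mul_assoc, trace_mul_comm, Matrix.mul_assoc, aeval_mul_mul_eq_mul_aeval_mul,
    ← Matrix.mul_assoc]

theorem aeval_transpose (A : Matrix n n α) (p : R[X]) : aeval Aᵀ p = (aeval A p)ᵀ := by
  simpa [aeval_op_apply] using
    congrArg MulOpposite.unop (aeval_algHom_apply (transposeAlgEquiv n R α) A p)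

theorem aeval_one_kronecker (A : Matrix n n α) (p : R[X]) :
    aeval ((1 : Matrix m m α) ⊗ₖ A) p = (1 : Matrix m m α) ⊗ₖ aeval A p := by
  induction p using Polynomial.induction_on' with
  | add p q hp hq => simp only [map_add, hp, hq, kronecker_add]
  | monomial k r =>
    have hpow : ((1 : Matrix m m α) ⊗ₖ A) ^ k = (1 : Matrix m m α) ⊗ₖ (A ^ k) := by
      induction k with
      | zero => simp
      | succ k ih => rw [pow_succ, ih, pow_succ, ← mul_kronecker_mul, one_mul]
    simp [aeval_monomial, hpow, Algebra.algebraMap_eq_smul_one, kronecker_smul]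

end CommSemiring

theorem trace_mul_aeval_sub_sq [CommRing α] [Algebra R α] (A K : Matrix n n α) (p : R[X]) :
    (A * (aeval A p - K) ^ 2).trace
      = (A * aeval A (p ^ 2)).trace - 2 * (A * aeval A p * K).trace + (A * K ^ 2).trace := by
  have hcomm : A * aeval A p = aeval A p * A := by
    simpa using congrArg (aeval A) (mul_comm X p)
  have hcross : (A * (K * aeval A p)).trace = (A * aeval A p * K).trace := by
    rw [← Matrix.mul_assoc, trace_mul_cycle, hcomm]
  rw [map_pow, sq, sq, sq, sub_mul, mul_sub, mul_sub, Matrix.mul_sub, Matrix.mul_sub,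
    Matrix.mul_sub, trace_sub, trace_sub, trace_sub, hcross]
  simp only [Matrix.mul_assoc]
  ring

end Matrix

theorem hermFun_eq_cfc {n : Type*} [Fintype n] [DecidableEq n] (f : ℝ → ℝ) {A : Matrix n n ℂ}
    (hA : A.IsHermitian) : hermFun f A = cfc f A := by
  rw [hermFun, dif_pos hA, hA.cfc_eq]
  rfl

theorem hermFun_eq_aeval {n : Type*} [Fintype n] [DecidableEq n] {f : ℝ → ℝ}
    {A : Matrix n n ℂ} (hA : A.IsHermitian) {p : ℝ[X]}
    (hp : Set.EqOn p.eval f (spectrum ℝ A)) : hermFun f A = aeval A p := by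
  rw [hermFun_eq_cfc f hA, cfc_congr hp.symm]
  exact cfc_polynomial p A hA

section PureState

variable {a b c : ℕ} (ψ : Fin a × Fin b × Fin c → ℂ)

def swapBC : Fin a × Fin c × Fin b → ℂ := fun x => ψ (x.1, x.2.2, x.2.1)

theorem rhoAB_swapBC : rhoAB (swapBC ψ) = rhoAC ψ := rfl

theorem rhoB_swapBC : rhoB (swapBC ψ) = rhoC ψ := rfl

theorem rhoC_swapBC : rhoC (swapBC ψ) = rhoB ψ := rfl

def stateMatrix : Matrix (Fin a × Fin b) (Fin c) ℂ := Matrix.of fun p k => ψ (p.1, p.2, k)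

theorem rhoAB_eq_stateMatrix_mul : rhoAB ψ = stateMatrix ψ * (stateMatrix ψ)ᴴ := by
  ext p q
  simp [rhoAB, stateMatrix, Matrix.mul_apply]

theorem rhoC_eq_stateMatrix_mul : rhoC ψ = ((stateMatrix ψ)ᴴ * stateMatrix ψ)ᵀ := by
  ext p q
  simp [rhoC, stateMatrix, Matrix.mul_apply, Fintype.sum_prod_type, mul_comm]

theorem rhoAB_isHermitian : (rhoAB ψ).IsHermitian := by
  rw [rhoAB_eq_stateMatrix_mul]
  exact Matrix.isHermitian_mul_conjTranspose_self _

theorem rhoC_isHermitian : (rhoC ψ).IsHermitian := by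
  rw [rhoC_eq_stateMatrix_mul]
  exact (Matrix.isHermitian_conjTranspose_mul_self _).transpose

theorem rhoB_isHermitian : (rhoB ψ).IsHermitian := rhoC_isHermitian (swapBC ψ)

theorem trace_rhoAB_mul_one_kronecker (X : Matrix (Fin b) (Fin b) ℂ) :
    (rhoAB ψ * ((1 : Matrix (Fin a) (Fin a) ℂ) ⊗ₖ X)).trace = (rhoB ψ * X).trace := by
  simp only [Matrix.trace, Matrix.diag, Matrix.mul_apply, rhoAB, rhoB,
    Matrix.kroneckerMap_apply, Matrix.one_apply, Fintype.sum_prod_type, ite_mul, one_mul,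
    zero_mul, mul_ite, mul_zero, Finset.sum_ite_eq', Finset.mem_univ, if_true, Finset.sum_mul,
    Finset.sum_ite_irrel, Finset.sum_const_zero]
  rw [Finset.sum_comm]
  refine Finset.sum_congr rfl fun j _ => ?_
  rw [Finset.sum_comm]

theorem trace_rhoAB_mul_aeval (q : ℝ[X]) :
    (rhoAB ψ * aeval (rhoAB ψ) q).trace = (rhoC ψ * aeval (rhoC ψ) q).trace := by
  have h : (stateMatrix ψ)ᴴ * stateMatrix ψ = (rhoC ψ)ᵀ := by
    rw [rhoC_eq_stateMatrix_mul, Matrix.transpose_transpose]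
  rw [rhoAB_eq_stateMatrix_mul, Matrix.trace_mul_aeval_mul_comm, h, Matrix.aeval_transpose,
    ← Matrix.transpose_mul, Matrix.trace_transpose, Matrix.trace_mul_comm]

theorem rhoAB_mul_aeval (q : ℝ[X]) :
    rhoAB ψ * aeval (rhoAB ψ) q
      = stateMatrix ψ * (aeval (rhoC ψ) q)ᵀ * (stateMatrix ψ)ᴴ := by
  have h : (stateMatrix ψ)ᴴ * stateMatrix ψ = (rhoC ψ)ᵀ := by
    rw [rhoC_eq_stateMatrix_mul, Matrix.transpose_transpose]
  rw [rhoAB_eq_stateMatrix_mul, Matrix.mul_assoc, ← Matrix.aeval_mul_mul_eq_mul_aeval_mul, h,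
    Matrix.aeval_transpose, ← Matrix.mul_assoc]

/-- Both sides equal `⟨ψ, (1 ⊗ P ⊗ Q) ψ⟩`. -/
theorem trace_stateMatrix_swapBC (P : Matrix (Fin b) (Fin b) ℂ) (Q : Matrix (Fin c) (Fin c) ℂ) :
    (stateMatrix ψ * Qᵀ * (stateMatrix ψ)ᴴ * ((1 : Matrix (Fin a) (Fin a) ℂ) ⊗ₖ P)).trace
      = (stateMatrix (swapBC ψ) * Pᵀ * (stateMatrix (swapBC ψ))ᴴ
          * ((1 : Matrix (Fin a) (Fin a) ℂ) ⊗ₖ Q)).trace := by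
  simp only [Matrix.trace, Matrix.diag, Matrix.mul_apply, stateMatrix, swapBC, Matrix.of_apply,
    Matrix.kroneckerMap_apply, Matrix.one_apply, Matrix.conjTranspose_apply,
    Matrix.transpose_apply, Fintype.sum_prod_type, ite_mul, one_mul, zero_mul, mul_ite, mul_zero,
    Finset.sum_ite_irrel, Finset.sum_const_zero, Finset.sum_ite_eq', Finset.mem_univ, if_true,
    Finset.sum_mul]
  simp only [← Finset.sum_product']
  refine Fintype.sum_equiv
    ⟨fun x => (x.1, x.2.2.2.2, x.2.2.2.1, x.2.2.1, x.2.1),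
     fun x => (x.1, x.2.2.2.2, x.2.2.2.1, x.2.2.1, x.2.1), fun _ => rfl, fun _ => rfl⟩ _ _ ?_
  rintro ⟨i, j, j', k', k⟩
  simp only [Equiv.coe_fn_mk]
  ring

theorem varEnt_rhoAB_one_kronecker_rhoB_eq (p : ℝ[X])
    (hp : Set.EqOn p.eval (fun x => if x ≤ 0 then 0 else Real.log x)
      (spectrum ℝ (rhoAB ψ) ∪ spectrum ℝ ((1 : Matrix (Fin a) (Fin a) ℂ) ⊗ₖ rhoB ψ))) :
    varEnt (rhoAB ψ) ((1 : Matrix (Fin a) (Fin a) ℂ) ⊗ₖ rhoB ψ)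
      = ((rhoC ψ * aeval (rhoC ψ) (p ^ 2)).trace
          - 2 * (stateMatrix ψ * (aeval (rhoC ψ) p)ᵀ * (stateMatrix ψ)ᴴ
              * ((1 : Matrix (Fin a) (Fin a) ℂ) ⊗ₖ aeval (rhoB ψ) p)).trace
          + (rhoB ψ * aeval (rhoB ψ) (p ^ 2)).trace).re
        - ((rhoC ψ * aeval (rhoC ψ) p).trace - (rhoB ψ * aeval (rhoB ψ) p).trace).re ^ 2 := by
  have hlogAB : mLog (rhoAB ψ) = aeval (rhoAB ψ) p :=
    hermFun_eq_aeval (rhoAB_isHermitian ψ) (hp.mono Set.subset_union_left)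
  have hlogB : mLog ((1 : Matrix (Fin a) (Fin a) ℂ) ⊗ₖ rhoB ψ)
      = (1 : Matrix (Fin a) (Fin a) ℂ) ⊗ₖ aeval (rhoB ψ) p :=
    (hermFun_eq_aeval (rhoB_isHermitian ψ).one_kronecker (hp.mono Set.subset_union_right)).trans
      (Matrix.aeval_one_kronecker _ _)
  have hsq : ((1 : Matrix (Fin a) (Fin a) ℂ) ⊗ₖ aeval (rhoB ψ) p) ^ 2
      = (1 : Matrix (Fin a) (Fin a) ℂ) ⊗ₖ aeval (rhoB ψ) (p ^ 2) := by
    rw [← Matrix.aeval_one_kronecker, ← map_pow, Matrix.aeval_one_kronecker]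
  rw [varEnt, relEnt, hlogAB, hlogB, Matrix.trace_mul_aeval_sub_sq, hsq, Matrix.mul_sub,
    Matrix.trace_sub, trace_rhoAB_mul_aeval, trace_rhoAB_mul_aeval, trace_rhoAB_mul_one_kronecker,
    trace_rhoAB_mul_one_kronecker, rhoAB_mul_aeval]

end PureState

theorem stmt2_general (a b c : ℕ) (ψ : Fin a × Fin b × Fin c → ℂ) :
    varEnt (rhoAB ψ) ((1 : Matrix (Fin a) (Fin a) ℂ) ⊗ₖ rhoB ψ)
      = varEnt (rhoAC ψ) ((1 : Matrix (Fin a) (Fin a) ℂ) ⊗ₖ rhoC ψ) := by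
  obtain ⟨p, hp⟩ := Polynomial.exists_eqOn_eval (Set.toFinite
    ((spectrum ℝ (rhoAB ψ) ∪ spectrum ℝ ((1 : Matrix (Fin a) (Fin a) ℂ) ⊗ₖ rhoB ψ)) ∪
      (spectrum ℝ (rhoAC ψ) ∪ spectrum ℝ ((1 : Matrix (Fin a) (Fin a) ℂ) ⊗ₖ rhoC ψ))))
    (fun x => if x ≤ 0 then 0 else Real.log x)
  have hAC := varEnt_rhoAB_one_kronecker_rhoB_eq (swapBC ψ) p (hp.mono Set.subset_union_right)
  rw [rhoAB_swapBC, rhoB_swapBC, rhoC_swapBC, ← trace_stateMatrix_swapBC] at hAC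
  rw [varEnt_rhoAB_one_kronecker_rhoB_eq ψ p (hp.mono Set.subset_union_left), hAC]
  simp only [Complex.sub_re, Complex.add_re]
  ring

/-- Duality of the quantum information variance for a pure tripartite state:
`V(ρ_AB ‖ I_A ⊗ ρ_B) = V(ρ_AC ‖ I_A ⊗ ρ_C)`. -/
theorem stmt2 (a b c : ℕ) (ψ : Fin a × Fin b × Fin c → ℂ)
    (hψ : ∑ x, Complex.normSq (ψ x) = 1) :
    varEnt (rhoAB ψ) ((1 : Matrix (Fin a) (Fin a) ℂ) ⊗ₖ rhoB ψ)
      = varEnt (rhoAC ψ) ((1 : Matrix (Fin a) (Fin a) ℂ) ⊗ₖ rhoC ψ) :=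
  stmt2_general a b c ψ
end

section
/- (Average vs. entanglement fidelity) For any quantum operation (CPTP map) Λ on B(H) with d = dim H, F_avg(Λ) = (d·F_ent(Λ) + 1)/(d+1), where F_avg(Λ) = ∫ dμ(φ) ⟨φ|Λ(φ)|φ⟩ over Haar-random pure states, and F_ent(Λ) = ⟨Φ|(id⊗Λ)(Φ)|Φ⟩ for the maximally entangled state Φ on H⊗H. -/
/-! Unitary invariance pins down the fourth moments of a random unit vector,
`E[ψᵢ ψ̄ⱼ ψₖ ψ̄ₗ] = (δᵢⱼ δₖₗ + δᵢₗ δₖⱼ) / (d (d + 1))`: diagonal phase unitaries kill every moment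
whose indices are not paired, permutations make the paired ones depend only on whether `i = k`,
a real reflection mixing two coordinates gives `E|ψₚ|⁴ = 2 E|ψₚ|²|ψ_q|²`, and `‖ψ‖ = 1` fixes the
scale. Expanding `⟨ψ|Λ(ψψ*)|ψ⟩` in the matrix units then gives
`F_avg = (∑ᵢ tr Λ(Eᵢᵢ) + ∑ᵢⱼ Λ(Eᵢⱼ)ᵢⱼ) / (d (d + 1))`; the first sum is `d` by trace
preservation and the second is `d² F_ent`. -/

open Matrix Kronecker ComplexOrder MeasureTheory

/-- Blockwise application of a map on the second tensor factor: `id ⊗ Λ`. -/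
def lTen {R A B : Type*} (Λ : Matrix A A ℂ → Matrix B B ℂ)
    (M : Matrix (R × A) (R × A) ℂ) : Matrix (R × B) (R × B) ℂ :=
  fun p q => Λ (fun x y => M (p.1, x) (q.1, y)) p.2 q.2

/-- Complete positivity of a map on matrix algebras. -/
def IsCP {A B : Type*} [Fintype A] [DecidableEq A] [Fintype B] [DecidableEq B]
    (Λ : Matrix A A ℂ → Matrix B B ℂ) : Prop :=
  ∀ (k : ℕ) (M : Matrix (Fin k × A) (Fin k × A) ℂ),
    M.PosSemidef → (lTen Λ M).PosSemidef

/-- The maximally entangled state `Φ` as a density matrix. -/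
noncomputable def mes (d : ℕ) : Matrix (Fin d × Fin d) (Fin d × Fin d) ℂ :=
  fun p q => if p.1 = p.2 ∧ q.1 = q.2 then ((d : ℂ))⁻¹ else 0

/-- The maximally entangled state `|Φ⟩` as a vector. -/
noncomputable def mesVec (d : ℕ) : Fin d × Fin d → ℂ :=
  fun p => if p.1 = p.2 then ((Real.sqrt d)⁻¹ : ℂ) else 0

open ComplexConjugate

section FiniteSums

variable {α κ E : Type*} [MeasurableSpace α] {μ : Measure α} [Fintype κ]
  [NormedAddCommGroup E] {f : κ → κ → κ → κ → α → E}

lemma integrable_sum_sum_sum_sum (hf : ∀ a b c e, Integrable (f a b c e) μ) :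
    Integrable (fun x => ∑ a, ∑ b, ∑ c, ∑ e, f a b c e x) μ :=
  integrable_finsetSum _ fun a _ => integrable_finsetSum _ fun b _ =>
    integrable_finsetSum _ fun c _ => integrable_finsetSum _ fun e _ => hf a b c e

lemma integral_sum_sum_sum_sum [NormedSpace ℝ E] (hf : ∀ a b c e, Integrable (f a b c e) μ) :
    ∫ x, ∑ a, ∑ b, ∑ c, ∑ e, f a b c e x ∂μ = ∑ a, ∑ b, ∑ c, ∑ e, ∫ x, f a b c e x ∂μ := by
  simp only [← Fintype.sum_prod_type']
  exact integral_finsetSum _ fun t _ => hf _ _ _ _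

end FiniteSums

lemma LinearMap.map_eq_sum_single {m n R M : Type*} [Fintype m] [Fintype n] [DecidableEq m]
    [DecidableEq n] [CommSemiring R] [AddCommMonoid M] [Module R M]
    (Λ : Matrix m n R →ₗ[R] M) (X : Matrix m n R) :
    Λ X = ∑ i, ∑ j, X i j • Λ (Matrix.single i j 1) := by
  simp only [← map_smul, smul_single, smul_eq_mul, mul_one, ← map_sum, ← matrix_eq_sum_single]

namespace Matrix

variable {ι α : Type*} [Fintype ι] [DecidableEq ι] [CommRing α] [StarRing α]

lemma diagonal_mem_unitaryGroup {z : ι → α} (hz : ∀ a, star (z a) * z a = 1) :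
    diagonal z ∈ unitaryGroup ι α := by
  rw [mem_unitaryGroup_iff', star_eq_conjTranspose, diagonal_conjTranspose,
    diagonal_mul_diagonal, ← diagonal_one]
  exact congrArg diagonal (funext hz)

lemma permMatrix_mem_unitaryGroup (σ : Equiv.Perm ι) :
    σ.permMatrix α ∈ unitaryGroup ι α := by
  rw [mem_unitaryGroup_iff', star_eq_conjTranspose, conjTranspose_permMatrix,
    ← permMatrix_mul, mul_inv_cancel, permMatrix_one]

def householder (v : ι → α) : Matrix ι ι α := 1 - (2 : α) • vecMulVec v (star v)

lemma householder_mem_unitaryGroup {v : ι → α} (hv : star v ⬝ᵥ v = 1) :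
    householder v ∈ unitaryGroup ι α := by
  have hself : star (householder v) = householder v := by
    simp [householder, star_eq_conjTranspose]
  rw [mem_unitaryGroup_iff', hself, householder, sub_mul, mul_sub, mul_sub, smul_mul_smul,
    vecMulVec_mul_vecMulVec, hv, one_smul]
  simp only [one_mul, mul_one, mul_smul_comm]
  module

end Matrix

section QuarticMoment

variable {ι : Type*} {μ : Measure (ι → ℂ)}

variable (μ) in
noncomputable def quarticMoment (i j k l : ι) : ℂ :=
  ∫ ψ, ψ i * conj (ψ j) * ψ k * conj (ψ l) ∂μ

lemma quarticMoment_comm_right (i j k l : ι) :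
    quarticMoment μ i j k l = quarticMoment μ i l k j := by
  simp only [quarticMoment]
  congr 1 with ψ
  ring

variable [Fintype ι]

lemma norm_le_one_of_sum_normSq_eq_one {ψ : ι → ℂ} (h : ∑ i, Complex.normSq (ψ i) = 1)
    (i : ι) : ‖ψ i‖ ≤ 1 := by
  have : Complex.normSq (ψ i) ≤ 1 :=
    h ▸ Finset.single_le_sum (fun j _ => Complex.normSq_nonneg (ψ j)) (Finset.mem_univ i)
  rw [Complex.normSq_eq_norm_sq] at this
  exact (sq_le_one_iff₀ (norm_nonneg _)).mp this

lemma integrable_quartic [IsFiniteMeasure μ] (hsph : ∀ᵐ ψ ∂μ, ∑ i, Complex.normSq (ψ i) = 1)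
    (i j k l : ι) : Integrable (fun ψ => ψ i * conj (ψ j) * ψ k * conj (ψ l)) μ := by
  refine Integrable.mono' (integrable_const 1) (by fun_prop) (hsph.mono fun ψ h => ?_)
  have := norm_le_one_of_sum_normSq_eq_one h
  simp only [norm_mul, Complex.norm_conj]
  exact mul_le_one₀ (mul_le_one₀ (mul_le_one₀ (this i) (norm_nonneg _) (this j))
    (norm_nonneg _) (this k)) (norm_nonneg _) (this l)

lemma sum_quarticMoment_diag [IsProbabilityMeasure μ]
    (hsph : ∀ᵐ ψ ∂μ, ∑ i, Complex.normSq (ψ i) = 1) :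
    ∑ i, ∑ k, quarticMoment μ i i k k = 1 := by
  simp only [quarticMoment, ← Fintype.sum_prod_type']
  rw [← integral_finsetSum _ fun t _ => integrable_quartic hsph _ _ _ _]
  have hsq : ∀ᵐ ψ ∂μ, ∑ t : ι × ι, ψ t.1 * conj (ψ t.1) * ψ t.2 * conj (ψ t.2) = 1 := by
    filter_upwards [hsph] with ψ hψ
    have hnorm : ∑ i, ψ i * conj (ψ i) = 1 := by
      simp only [Complex.mul_conj, ← Complex.ofReal_sum, hψ, Complex.ofReal_one]
    calc ∑ t : ι × ι, ψ t.1 * conj (ψ t.1) * ψ t.2 * conj (ψ t.2)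
        = (∑ i, ψ i * conj (ψ i)) * ∑ k, ψ k * conj (ψ k) := by
          rw [Fintype.sum_prod_type, Finset.sum_mul_sum]
          simp only [mul_assoc]
      _ = 1 := by rw [hnorm, one_mul]
  rw [integral_congr_ae hsq, integral_const, probReal_univ, one_smul]

variable [DecidableEq ι]

variable (μ) in
def IsUnitarilyInvariant : Prop :=
  ∀ U ∈ unitaryGroup ι ℂ, μ.map (U *ᵥ ·) = μ

lemma IsUnitarilyInvariant.integral_comp_mulVec (hμ : IsUnitarilyInvariant μ)
    {U : Matrix ι ι ℂ} (hU : U ∈ unitaryGroup ι ℂ)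
    {E : Type*} [NormedAddCommGroup E] [NormedSpace ℝ E] {f : (ι → ℂ) → E}
    (hf : AEStronglyMeasurable f μ) :
    ∫ ψ, f (U *ᵥ ψ) ∂μ = ∫ ψ, f ψ ∂μ := by
  have hmeas : AEMeasurable (U *ᵥ ·) μ :=
    (continuous_const.matrix_mulVec continuous_id).aemeasurable
  rw [← integral_map hmeas (by rwa [hμ U hU]), hμ U hU]

lemma quarticMoment_eq_sum_of_mem_unitaryGroup [IsFiniteMeasure μ]
    (hμ : IsUnitarilyInvariant μ) (hsph : ∀ᵐ ψ ∂μ, ∑ i, Complex.normSq (ψ i) = 1)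
    {U : Matrix ι ι ℂ} (hU : U ∈ unitaryGroup ι ℂ) (i j k l : ι) :
    quarticMoment μ i j k l = ∑ a, U i a * ∑ b, conj (U j b) * ∑ c, U k c *
      ∑ e, conj (U l e) * quarticMoment μ a b c e := by
  have hexpand : ∀ ψ : ι → ℂ,
      (U *ᵥ ψ) i * conj ((U *ᵥ ψ) j) * (U *ᵥ ψ) k * conj ((U *ᵥ ψ) l) =
        ∑ a, ∑ b, ∑ c, ∑ e, U i a * conj (U j b) * U k c * conj (U l e) *
          (ψ a * conj (ψ b) * ψ c * conj (ψ e)) := by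
    intro ψ
    simp only [mulVec, dotProduct, map_sum, map_mul]
    rw [mul_assoc, mul_assoc, Finset.sum_mul]
    refine Finset.sum_congr rfl fun a _ => ?_
    rw [Finset.sum_mul, Finset.mul_sum]
    refine Finset.sum_congr rfl fun b _ => ?_
    rw [Finset.sum_mul, Finset.mul_sum, Finset.mul_sum]
    refine Finset.sum_congr rfl fun c _ => ?_
    rw [Finset.mul_sum, Finset.mul_sum, Finset.mul_sum]
    refine Finset.sum_congr rfl fun e _ => ?_
    ring
  rw [quarticMoment, ← hμ.integral_comp_mulVec hU (by fun_prop)]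
  simp only [hexpand]
  rw [integral_sum_sum_sum_sum fun a b c e => (integrable_quartic hsph a b c e).const_mul _]
  simp only [integral_const_mul, quarticMoment, Finset.mul_sum, mul_assoc]

lemma quarticMoment_eq_mul_of_diagonal [IsFiniteMeasure μ] (hμ : IsUnitarilyInvariant μ)
    (hsph : ∀ᵐ ψ ∂μ, ∑ i, Complex.normSq (ψ i) = 1) {z : ι → ℂ}
    (hz : ∀ a, star (z a) * z a = 1) (i j k l : ι) :
    quarticMoment μ i j k l = z i * conj (z j) * z k * conj (z l) * quarticMoment μ i j k l := by
  conv_lhs => rw [quarticMoment_eq_sum_of_mem_unitaryGroup hμ hsph (diagonal_mem_unitaryGroup hz)]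
  simp only [diagonal_apply, apply_ite (starRingEnd ℂ), map_zero, ite_mul, zero_mul,
    Finset.sum_ite_eq, Finset.mem_univ, ↓reduceIte]
  ring

lemma quarticMoment_perm [IsFiniteMeasure μ] (hμ : IsUnitarilyInvariant μ)
    (hsph : ∀ᵐ ψ ∂μ, ∑ i, Complex.normSq (ψ i) = 1) (σ : Equiv.Perm ι) (i j k l : ι) :
    quarticMoment μ (σ i) (σ j) (σ k) (σ l) = quarticMoment μ i j k l := by
  rw [quarticMoment_eq_sum_of_mem_unitaryGroup hμ hsph (permMatrix_mem_unitaryGroup σ) i]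
  simp [Equiv.Perm.permMatrix, PEquiv.toMatrix_apply]

lemma quarticMoment_eq_zero [IsFiniteMeasure μ] (hμ : IsUnitarilyInvariant μ)
    (hsph : ∀ᵐ ψ ∂μ, ∑ i, Complex.normSq (ψ i) = 1) {i j k l : ι}
    (h : ¬((i = j ∧ k = l) ∨ (i = l ∧ k = j))) : quarticMoment μ i j k l = 0 := by
  -- The phase `I` on coordinate `t` multiplies the moment by `I ^ m`, where `m` counts the
  -- indices among `i, k` equal to `t` minus those among `j, l`; as `{i, k} ≠ {j, l}` as
  -- multisets, some `t` gives `m ≠ 0`.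
  let z : ι → ι → ℂ := fun t a => if a = t then Complex.I else 1
  obtain ⟨t, ht⟩ : ∃ t, z t i * conj (z t j) * z t k * conj (z t l) ≠ 1 := by
    refine ⟨if i = j ∨ i = l then k else i, ?_⟩
    simp only [z]
    split_ifs <;> simp_all [Complex.ext_iff] <;> norm_num
  have hz : ∀ a, star (z t a) * z t a = 1 := by
    intro a
    by_cases ha : a = t <;> simp [z, ha]
  have := quarticMoment_eq_mul_of_diagonal hμ hsph hz i j k l
  exact (mul_left_eq_self₀.mp this.symm).resolve_left ht

lemma quarticMoment_diag_eq_two_mul [IsFiniteMeasure μ] (hμ : IsUnitarilyInvariant μ)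
    (hsph : ∀ᵐ ψ ∂μ, ∑ i, Complex.normSq (ψ i) = 1) {p q : ι} (hpq : p ≠ q) :
    quarticMoment μ p p p p = 2 * quarticMoment μ p p q q := by
  -- The reflection along `(3/5) eₚ + (4/5) e_q` has row `p` equal to `a eₚ + b e_q` with
  -- `(a, b) = (7/25, -24/25)`; invariance under it reads `A = (a⁴ + b⁴) A + 4 a²b² C` for
  -- `A = E|ψₚ|⁴` and `C = E|ψₚ|²|ψ_q|²`, and `a² + b² = 1` turns this into `A = 2 C`.
  set v : ι → ℂ := Pi.single p (3 / 5) + Pi.single q (4 / 5)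
  have hv : star v ⬝ᵥ v = 1 := by
    norm_num [v, dotProduct, Pi.single_apply, Finset.sum_add_distrib, add_mul, mul_add, hpq,
      hpq.symm, map_ofNat]
  have hH : ∀ a, householder v p a =
      (if a = p then 7 / 25 else 0) - (if a = q then 24 / 25 else 0) := by
    intro a
    rcases eq_or_ne a p with rfl | hap
    · norm_num [householder, v, vecMulVec_apply, hpq]
    rcases eq_or_ne a q with rfl | haq
    · norm_num [householder, v, vecMulVec_apply, one_apply, hpq, hpq.symm]
    · simp [householder, v, vecMulVec_apply, one_apply, hap, haq, hap.symm]
  have hrow : ∀ g : ι → ℂ, ∑ a, householder v p a * g a = 7 / 25 * g p - 24 / 25 * g q := by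
    intro g
    simp [hH, sub_mul, ite_mul, Finset.sum_sub_distrib]
  have hrow' : ∀ g : ι → ℂ,
      ∑ a, conj (householder v p a) * g a = 7 / 25 * g p - 24 / 25 * g q := by
    intro g
    simp [hH, sub_mul, ite_mul, Finset.sum_sub_distrib, apply_ite (starRingEnd ℂ), map_ofNat]
  have h := quarticMoment_eq_sum_of_mem_unitaryGroup hμ hsph
    (householder_mem_unitaryGroup hv) p p p p
  simp only [hrow, hrow'] at h
  simp only [quarticMoment_eq_zero hμ hsph, hpq, hpq.symm, and_false, and_true, and_self, or_self,
    not_false_eq_true, mul_zero, sub_zero, zero_sub, sub_self] at h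
  have hqqqq := quarticMoment_perm hμ hsph (Equiv.swap p q) p p p p
  have hqqpp := quarticMoment_perm hμ hsph (Equiv.swap p q) p p q q
  simp only [Equiv.swap_apply_left, Equiv.swap_apply_right] at hqqqq hqqpp
  rw [quarticMoment_comm_right p q q p, quarticMoment_comm_right q p p q, hqqqq, hqqpp] at h
  linear_combination (390625 / 56448 : ℂ) * h

lemma quarticMoment_pair [IsFiniteMeasure μ] (hμ : IsUnitarilyInvariant μ)
    (hsph : ∀ᵐ ψ ∂μ, ∑ i, Complex.normSq (ψ i) = 1) (p i k : ι) :
    quarticMoment μ i i k k = quarticMoment μ p p p p / 2 * (1 + if i = k then 1 else 0) := by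
  have hdiag : quarticMoment μ i i i i = quarticMoment μ p p p p := by
    simpa using (quarticMoment_perm hμ hsph (Equiv.swap i p) i i i i).symm
  by_cases hik : i = k
  · subst hik
    rw [hdiag, if_pos rfl]
    ring
  · rw [← hdiag, quarticMoment_diag_eq_two_mul hμ hsph hik, if_neg hik]
    ring

theorem quarticMoment_eq [IsProbabilityMeasure μ] (hμ : IsUnitarilyInvariant μ)
    (hsph : ∀ᵐ ψ ∂μ, ∑ i, Complex.normSq (ψ i) = 1) (i j k l : ι) :
    quarticMoment μ i j k l =
      ((if i = j then 1 else 0) * (if k = l then 1 else 0) +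
        (if i = l then 1 else 0) * (if k = j then 1 else 0)) /
        (Fintype.card ι * (Fintype.card ι + 1)) := by
  have hdiag : quarticMoment μ i i i i * (Fintype.card ι * (Fintype.card ι + 1)) = 2 := by
    have h := sum_quarticMoment_diag hsph
    rw [Finset.sum_congr rfl fun a _ => Finset.sum_congr rfl fun b _ =>
      quarticMoment_pair hμ hsph i a b] at h
    simp only [mul_add, mul_one, mul_ite, mul_zero, Finset.sum_add_distrib, Finset.sum_const,
      Finset.card_univ, nsmul_eq_mul, Finset.sum_ite_eq, Finset.mem_univ, ↓reduceIte] at h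
    linear_combination 2 * h
  have hN : (Fintype.card ι * (Fintype.card ι + 1) : ℂ) ≠ 0 := by
    intro h0
    rw [h0, mul_zero] at hdiag
    norm_num at hdiag
  have hpair : ∀ k, quarticMoment μ i i k k =
      (1 + if i = k then 1 else 0) / (Fintype.card ι * (Fintype.card ι + 1)) := by
    intro k
    rw [quarticMoment_pair hμ hsph i, eq_div_iff hN]
    linear_combination (1 + if i = k then 1 else 0) / 2 * hdiag
  by_cases h : (i = j ∧ k = l) ∨ (i = l ∧ k = j)
  · rcases h with ⟨rfl, rfl⟩ | ⟨rfl, rfl⟩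
    · rw [hpair]
      by_cases hik : i = k <;> simp [hik, eq_comm]
    · rw [quarticMoment_comm_right, hpair]
      by_cases hik : i = k <;> simp [hik, eq_comm, add_comm]
  · rw [quarticMoment_eq_zero hμ hsph h, eq_comm, div_eq_zero_iff]
    left
    split_ifs <;> simp_all

end QuarticMoment

section Fidelity

variable {ι : Type*} [Fintype ι] [DecidableEq ι]

lemma star_dotProduct_map_vecMulVec_mulVec (Λ : Matrix ι ι ℂ →ₗ[ℂ] Matrix ι ι ℂ) (ψ : ι → ℂ) :
    star ψ ⬝ᵥ (Λ (vecMulVec ψ (star ψ)) *ᵥ ψ) =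
      ∑ k, ∑ l, ∑ i, ∑ j,
        Λ (Matrix.single i j 1) k l * (ψ i * conj (ψ j) * ψ l * conj (ψ k)) := by
  rw [Λ.map_eq_sum_single]
  simp only [dotProduct, mulVec, Matrix.sum_apply, Matrix.smul_apply, smul_eq_mul,
    vecMulVec_apply, Pi.star_apply, RCLike.star_def, Finset.sum_mul, Finset.mul_sum]
  refine Finset.sum_congr rfl fun k _ => Finset.sum_congr rfl fun l _ =>
    Finset.sum_congr rfl fun i _ => Finset.sum_congr rfl fun j _ => ?_
  ring

lemma sum_trace_map_single_self {Λ : Matrix ι ι ℂ →ₗ[ℂ] Matrix ι ι ℂ}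
    (htp : ∀ X, (Λ X).trace = X.trace) :
    ∑ i, (Λ (Matrix.single i i 1)).trace = Fintype.card ι := by
  simp [htp]

variable {μ : Measure (ι → ℂ)}

lemma integrable_star_dotProduct_map_vecMulVec_mulVec [IsFiniteMeasure μ]
    (hsph : ∀ᵐ ψ ∂μ, ∑ i, Complex.normSq (ψ i) = 1) (Λ : Matrix ι ι ℂ →ₗ[ℂ] Matrix ι ι ℂ) :
    Integrable (fun ψ => star ψ ⬝ᵥ (Λ (vecMulVec ψ (star ψ)) *ᵥ ψ)) μ := by
  simp only [star_dotProduct_map_vecMulVec_mulVec]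
  exact integrable_sum_sum_sum_sum fun k l i j => (integrable_quartic hsph i j l k).const_mul _

lemma integral_star_dotProduct_map_vecMulVec_mulVec [IsProbabilityMeasure μ]
    (hμ : IsUnitarilyInvariant μ) (hsph : ∀ᵐ ψ ∂μ, ∑ i, Complex.normSq (ψ i) = 1)
    (Λ : Matrix ι ι ℂ →ₗ[ℂ] Matrix ι ι ℂ) :
    ∫ ψ, star ψ ⬝ᵥ (Λ (vecMulVec ψ (star ψ)) *ᵥ ψ) ∂μ =
      (∑ i, (Λ (Matrix.single i i 1)).trace + ∑ i, ∑ j, Λ (Matrix.single i j 1) i j) /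
        (Fintype.card ι * (Fintype.card ι + 1)) := by
  simp only [star_dotProduct_map_vecMulVec_mulVec]
  rw [integral_sum_sum_sum_sum fun k l i j => (integrable_quartic hsph i j l k).const_mul _]
  have hM : ∀ i j k l, ∫ ψ, ψ i * conj (ψ j) * ψ k * conj (ψ l) ∂μ = quarticMoment μ i j k l :=
    fun _ _ _ _ => rfl
  simp only [integral_const_mul, hM, quarticMoment_eq hμ hsph, mul_div_assoc', ← Finset.sum_div]
  congr 1
  simp only [mul_add, Finset.sum_add_distrib, mul_ite, mul_one, mul_zero, Finset.sum_ite_irrel,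
    Finset.sum_ite_eq, Finset.sum_ite_eq', Finset.mem_univ, if_true, Finset.sum_const_zero,
    trace, diag]
  rw [Finset.sum_comm]

end Fidelity

section MaximallyEntangled

variable {d : ℕ}

lemma star_mesVec_dotProduct_mulVec (L : Matrix (Fin d × Fin d) (Fin d × Fin d) ℂ) :
    star (mesVec d) ⬝ᵥ (L *ᵥ mesVec d) = (d : ℂ)⁻¹ * ∑ r, ∑ s, L (r, r) (s, s) := by
  have hsqrt : ((Real.sqrt d)⁻¹ : ℂ) * ((Real.sqrt d)⁻¹ : ℂ) = (d : ℂ)⁻¹ := by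
    rw [← mul_inv, ← Complex.ofReal_mul, Real.mul_self_sqrt d.cast_nonneg,
      Complex.ofReal_natCast]
  simp only [dotProduct, Pi.star_apply, mesVec, RCLike.star_def, apply_ite (starRingEnd ℂ),
    map_inv₀, Complex.conj_ofReal, map_zero, mulVec, mul_ite, mul_zero, Fintype.sum_prod_type,
    Finset.sum_ite_eq, Finset.mem_univ, ↓reduceIte, Finset.mul_sum, ite_mul, zero_mul,
    Finset.sum_ite_irrel, Finset.sum_const_zero]
  refine Finset.sum_congr rfl fun r _ => Finset.sum_congr rfl fun s _ => ?_
  rw [← hsqrt]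
  ring

lemma lTen_mes_apply (Λ : Matrix (Fin d) (Fin d) ℂ →ₗ[ℂ] Matrix (Fin d) (Fin d) ℂ)
    (p q : Fin d × Fin d) :
    lTen (fun X => Λ X) (mes d) p q = (d : ℂ)⁻¹ * Λ (Matrix.single p.1 q.1 1) p.2 q.2 := by
  have hblock : ∀ x y, mes d (p.1, x) (q.1, y) =
      ((d : ℂ)⁻¹ • Matrix.single p.1 q.1 1 : Matrix (Fin d) (Fin d) ℂ) x y := by
    intro x y
    by_cases h : p.1 = x ∧ q.1 = y <;> simp [mes, h]
  simp only [lTen, hblock]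
  rw [map_smul, Matrix.smul_apply, smul_eq_mul]

end MaximallyEntangled

theorem stmt16_general (d : ℕ) (hd : 0 < d)
    (Λ : Matrix (Fin d) (Fin d) ℂ →ₗ[ℂ] Matrix (Fin d) (Fin d) ℂ)
    (htp : ∀ X, (Λ X).trace = X.trace)
    (μ : Measure (Fin d → ℂ)) [IsProbabilityMeasure μ]
    (hsph : ∀ᵐ ψ ∂μ, ∑ i, Complex.normSq (ψ i) = 1)
    (hinvar : ∀ W ∈ Matrix.unitaryGroup (Fin d) ℂ,
      Measure.map (fun ψ => W *ᵥ ψ) μ = μ) :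
    (∫ ψ, (star ψ ⬝ᵥ (Λ (vecMulVec ψ (star ψ)) *ᵥ ψ)).re ∂μ)
      = (d * (star (mesVec d) ⬝ᵥ (lTen (fun X => Λ X) (mes d) *ᵥ mesVec d)).re + 1) /
        (d + 1) := by
  set S := ∑ r, ∑ s, Λ (Matrix.single r s 1) r s
  have hent : star (mesVec d) ⬝ᵥ (lTen (fun X => Λ X) (mes d) *ᵥ mesVec d) = S / (d * d) := by
    simp only [star_mesVec_dotProduct_mulVec, lTen_mes_apply, ← Finset.mul_sum, S]
    ring
  have hre := integral_re (integrable_star_dotProduct_map_vecMulVec_mulVec hsph Λ)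
  simp only [RCLike.re_to_complex] at hre
  rw [hre, integral_star_dotProduct_map_vecMulVec_mulVec hinvar hsph Λ,
    sum_trace_map_single_self htp, Fintype.card_fin, hent]
  have hd' : (d : ℂ) ≠ 0 := by exact_mod_cast hd.ne'
  have hcomplex : (d + S) / (d * (d + 1)) = (d * (S / (d * d)) + 1) / ((d + 1 : ℕ) : ℂ) := by
    push_cast
    field_simp
    ring
  rw [hcomplex, Complex.div_natCast_re]
  simp

/-- Average vs. entanglement fidelity: for a CPTP map `Λ` on a `d`-dimensional system,
`F_avg(Λ) = (d F_ent(Λ) + 1)/(d + 1)`, where `F_avg` is the Haar average of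
`⟨φ|Λ(φ)|φ⟩` over pure states and `F_ent = ⟨Φ|(id ⊗ Λ)(Φ)|Φ⟩`. -/
theorem stmt16 (d : ℕ) (hd : 0 < d)
    (Λ : Matrix (Fin d) (Fin d) ℂ →ₗ[ℂ] Matrix (Fin d) (Fin d) ℂ)
    (hcp : IsCP (fun X => Λ X)) (htp : ∀ X, (Λ X).trace = X.trace)
    (μ : Measure (Fin d → ℂ)) [IsProbabilityMeasure μ]
    (hsph : ∀ᵐ ψ ∂μ, ∑ i, Complex.normSq (ψ i) = 1)
    (hinvar : ∀ W ∈ Matrix.unitaryGroup (Fin d) ℂ,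
      Measure.map (fun ψ => W *ᵥ ψ) μ = μ) :
    (∫ ψ, (star ψ ⬝ᵥ (Λ (vecMulVec ψ (star ψ)) *ᵥ ψ)).re ∂μ)
      = (d * (star (mesVec d) ⬝ᵥ (lTen (fun X => Λ X) (mes d) *ᵥ mesVec d)).re + 1) /
        (d + 1) :=
  stmt16_general d hd Λ htp μ hsph hinvar
end
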